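/- arXiv:1112.1336 — 2 statements merged into one kernel-verified Lean document; each statement's English description precedes it below -/
import Mathlib

section
/- Consider the randomized consensus algorithm over an arbitrary random graph process, and suppose additionally there is a constant a* with a_ii(k) ≥ a* > 1/2 for all i and k. If ∑_{k=0}^∞ P_k < ∞, then P(lim_{k→∞} 𝓗(k)=0) = 0 for every initial condition x(0) with 𝓗(0)>0, hence for Lebesgue-almost all initial conditions x(0)∈ℝ^n. -/
open MeasureTheory ProbabilityTheory Filter

/-- The randomized consensus process over a random graph process, as in the paper:
`n` nodes, a random digraph process `E`, random weights `a` satisfying the weights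
rule with constant `η`, and Bernoulli update decisions `χ` with success probabilities
`P k`, independent of everything else. -/
structure RandConsensus (Ω : Type*) [MeasurableSpace Ω] where
  /-- number of nodes -/
  n : ℕ
  hn : 2 ≤ n
  μ : Measure Ω
  hμ : IsProbabilityMeasure μ
  /-- the random graph process: `E k ω u v` iff the arc `(u,v)` is present at time `k`. -/
  E : ℕ → Ω → Fin n → Fin n → Bool
  hE : ∀ k u v, Measurable fun ω => E k ω u v
  /-- arcs join two different nodes -/
  hEirrefl : ∀ k ω u, E k ω u u = false
  /-- success probabilities -/
  P : ℕ → ℝ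
  hP0 : ∀ k, 0 ≤ P k
  hP1 : ∀ k, P k < 1
  /-- Bernoulli decisions: node `i` takes the averaging update at time `k` iff `χ k i ω`. -/
  χ : ℕ → Fin n → Ω → Bool
  hχ : ∀ k i, Measurable (χ k i)
  hχP : ∀ k i, μ {ω | χ k i ω = true} = ENNReal.ofReal (P k)
  /-- the random averaging weights -/
  a : ℕ → Fin n → Fin n → Ω → ℝ
  ha : ∀ k i j, Measurable (a k i j)
  /-- weights-rule constant -/
  η : ℝ
  hη : 0 < η
  hηa : ∀ k i ω, ∀ j ∈ insert i (Finset.univ.filter fun j' => E k ω j' i = true),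
    η ≤ a k i j ω
  hasum : ∀ k i ω, ∑ j ∈ insert i (Finset.univ.filter fun j' => E k ω j' i = true),
    a k i j ω = 1
  /-- the Bernoulli decisions are mutually independent (over all times and nodes) -/
  hχindep : iIndepFun (fun (p : ℕ × Fin n) ω => χ p.1 p.2 ω) μ
  /-- the whole family of Bernoulli decisions is independent of the graph-and-weights process -/
  hχext : IndepFun (fun ω (p : ℕ × Fin n) => χ p.1 p.2 ω)
    (fun ω => ((fun k u v => E k ω u v), (fun k i j => a k i j ω))) μ

namespace RandConsensus

variable {Ω : Type*} [MeasurableSpace Ω] (S : RandConsensus Ω)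

/-- The neighbor set `N_i(k)` (including `i` itself). -/
def Nbr (k : ℕ) (ω : Ω) (i : Fin S.n) : Finset (Fin S.n) :=
  insert i (Finset.univ.filter fun j => S.E k ω j i = true)

/-- The (random) state process driven by the algorithm from initial condition `x0`. -/
def state (x0 : Fin S.n → ℝ) : ℕ → Ω → Fin S.n → ℝ
  | 0, _ => x0
  | k + 1, ω => fun i =>
      if S.χ k i ω then ∑ j ∈ S.Nbr k ω i, S.a k i j ω * state x0 k ω j
      else state x0 k ω i

/-- `𝓗 v = max_i v_i - min_i v_i`. -/
def spread (v : Fin S.n → ℝ) : ℝ :=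
  Finset.univ.sup' ⟨⟨0, by have := S.hn; omega⟩, Finset.mem_univ _⟩ v -
    Finset.univ.inf' ⟨⟨0, by have := S.hn; omega⟩, Finset.mem_univ _⟩ v

/-- Global almost sure consensus. -/
def consensus : Prop :=
  ∀ x0 : Fin S.n → ℝ,
    S.μ {ω | Tendsto (fun k => S.spread (S.state x0 k ω)) atTop (nhds 0)} = 1

/-- The `ε`-computation time. -/
noncomputable def Tcom (ε : ℝ) : ℕ∞ :=
  ⨆ x0 : Fin S.n → ℝ,
    ⨅ k ∈ {k : ℕ | S.μ {ω | ε ≤ S.spread (S.state x0 k ω) / S.spread x0}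
      ≤ ENNReal.ofReal ε}, (k : ℕ∞)

/-- The arc relation of the graph at time `k`. -/
def arcRel (k : ℕ) (ω : Ω) : Fin S.n → Fin S.n → Prop := fun u v => S.E k ω u v = true

/-- The arc relation of the joint graph over a set of times. -/
def jointRel (ω : Ω) (s : Set ℕ) : Fin S.n → Fin S.n → Prop :=
  fun u v => ∃ k ∈ s, S.E k ω u v = true

end RandConsensus

/-- A digraph is quasi-strongly connected if it has a root. -/
def IsQSC {n : ℕ} (rel : Fin n → Fin n → Prop) : Prop :=
  ∃ r, ∀ j, Relation.ReflTransGen rel r j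

/-- A (bidirectional) digraph is connected if every node is reachable from every node. -/
def IsConn {n : ℕ} (rel : Fin n → Fin n → Prop) : Prop :=
  ∀ i j, Relation.ReflTransGen rel i j

/-- A digraph is acyclic if it has no directed cycle. -/
def IsAcyclicRel {n : ℕ} (rel : Fin n → Fin n → Prop) : Prop :=
  ∀ v, ¬ Relation.TransGen rel v v


/-- Theorem 2 of the paper: under the self-confidence assumption `a_ii(k) ≥ a* > 1/2`,
if `∑ P_k < ∞` then the consensus probability is zero for every initial condition with
`𝓗(0) > 0`, hence for Lebesgue-almost all initial conditions. -/
theorem zero_consensus_probability {Ω : Type*} [MeasurableSpace Ω] (S : RandConsensus Ω)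
    (aStar : ℝ) (haStar : 1 / 2 < aStar)
    (hdiag : ∀ k i ω, aStar ≤ S.a k i i ω)
    (hsum : Summable S.P) :
    (∀ x0 : Fin S.n → ℝ, 0 < S.spread x0 →
        S.μ {ω | Tendsto (fun k => S.spread (S.state x0 k ω)) atTop (nhds 0)} = 0) ∧
      volume {x0 : Fin S.n → ℝ |
        S.μ {ω | Tendsto (fun k => S.spread (S.state x0 k ω)) atTop (nhds 0)} ≠ 0} = 0 := by
    classical
  have hn := S.hn
  haveI : NeZero S.n := ⟨by omega⟩
  set ne0 : (Finset.univ : Finset (Fin S.n)).Nonempty :=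
    ⟨⟨0, by omega⟩, Finset.mem_univ _⟩ with hne0
  -- Ω is nonempty
  haveI := S.hμ
  have hΩ : Nonempty Ω := by
    by_contra h
    have h1 : (S.μ Set.univ) = 1 := measure_univ
    rw [Set.univ_eq_empty_iff.mpr (not_nonempty_iff.mp h)] at h1
    simp at h1
  obtain ⟨ω0⟩ := hΩ
  -- aStar ≤ 1
  have hil : (0 : ℕ) < S.n := by omega
  have haStar1 : aStar ≤ 1 := by
    refine le_trans (hdiag 0 ⟨0, hil⟩ ω0) ?_
    have hsum1 := S.hasum 0 ⟨0, hil⟩ ω0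
    calc S.a 0 ⟨0, hil⟩ ⟨0, hil⟩ ω0
        ≤ ∑ j ∈ insert (⟨0, hil⟩ : Fin S.n)
            (Finset.univ.filter fun j' => S.E 0 ω0 j' ⟨0, hil⟩ = true), S.a 0 ⟨0, hil⟩ j ω0 :=
          Finset.single_le_sum (fun j hj => le_trans S.hη.le (S.hηa 0 ⟨0, hil⟩ ω0 j hj))
            (Finset.mem_insert_self _ _)
      _ = 1 := hsum1
  set c : ℝ := 2 * aStar - 1 with hc_def
  have hc : 0 < c := by rw [hc_def]; linarith
  -- weights are nonnegative
  have hwnn : ∀ k (i : Fin S.n) ω j, j ∈ S.Nbr k ω i → (0 : ℝ) ≤ S.a k i j ω := by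
    intro k i ω j hj
    exact le_trans S.hη.le (S.hηa k i ω j hj)
  -- one-step contraction lower bound
  have key : ∀ (x0 : Fin S.n → ℝ) (ω : Ω) (k : ℕ),
      c * S.spread (S.state x0 k ω) ≤ S.spread (S.state x0 (k + 1) ω) := by
    intro x0 ω k
    set v : Fin S.n → ℝ := S.state x0 k ω with hv
    set w : Fin S.n → ℝ := S.state x0 (k + 1) ω with hw
    set H : ℝ := Finset.univ.sup' ne0 v with hH
    set h : ℝ := Finset.univ.inf' ne0 v with hh
    have hvH : ∀ j, v j ≤ H := fun j => Finset.le_sup' v (Finset.mem_univ j)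
    have hvh : ∀ j, h ≤ v j := fun j => Finset.inf'_le v (Finset.mem_univ j)
    obtain ⟨p, -, hp⟩ := Finset.exists_mem_eq_sup' ne0 v
    obtain ⟨q, -, hq⟩ := Finset.exists_mem_eq_inf' ne0 v
    have hHh : h ≤ H := le_trans (hvh p) (hvH p)
    -- generic bounds for an updated node
    have hupd : ∀ i : Fin S.n, S.χ k i ω = true →
        (S.a k i i ω * v i + (1 - S.a k i i ω) * h ≤ w i ∧
         w i ≤ S.a k i i ω * v i + (1 - S.a k i i ω) * H) := by
      intro i hi
      have hmem : i ∈ S.Nbr k ω i := Finset.mem_insert_self _ _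
      have hwib : w i = ∑ j ∈ S.Nbr k ω i, S.a k i j ω * v j := by
        rw [hw]
        show S.state x0 (k + 1) ω i = _
        simp only [RandConsensus.state, hi, if_true]
        rfl
      have hsplit : ∑ j ∈ S.Nbr k ω i, S.a k i j ω * v j
          = S.a k i i ω * v i + ∑ j ∈ (S.Nbr k ω i).erase i, S.a k i j ω * v j :=
        (Finset.add_sum_erase _ _ hmem).symm
      have hrest : ∑ j ∈ (S.Nbr k ω i).erase i, S.a k i j ω = 1 - S.a k i i ω := by
        have h1 : S.a k i i ω + ∑ j ∈ (S.Nbr k ω i).erase i, S.a k i j ω = 1 := by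
          rw [Finset.add_sum_erase (S.Nbr k ω i) (fun j => S.a k i j ω) hmem]
          exact S.hasum k i ω
        linarith
      constructor
      · rw [hwib, hsplit]
        have : (1 - S.a k i i ω) * h = ∑ j ∈ (S.Nbr k ω i).erase i, S.a k i j ω * h := by
          rw [← Finset.sum_mul, hrest]
        rw [this]
        gcongr with j hj
        · exact hwnn k i ω j (Finset.mem_of_mem_erase hj)
        · exact hvh j
      · rw [hwib, hsplit]
        have : (1 - S.a k i i ω) * H = ∑ j ∈ (S.Nbr k ω i).erase i, S.a k i j ω * H := by
          rw [← Finset.sum_mul, hrest]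
        rw [this]
        gcongr with j hj
        · exact hwnn k i ω j (Finset.mem_of_mem_erase hj)
        · exact hvH j
    -- bound for p
    have hup : aStar * H + (1 - aStar) * h ≤ w p := by
      by_cases hch : S.χ k p ω = true
      · have h1 := (hupd p hch).1
        have h2 := hdiag k p ω
        have hpH : v p = H := by rw [hH, hp]
        rw [hpH] at h1
        nlinarith [h1, h2, hHh]
      · have heqp : w p = v p := by
          rw [hw]
          show S.state x0 (k + 1) ω p = _
          simp [RandConsensus.state, hch]
          rfl
        have hpH : v p = H := by rw [hH, hp]
        rw [heqp, hpH]
        nlinarith [hHh, haStar1]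
    -- bound for q
    have hdown : w q ≤ aStar * h + (1 - aStar) * H := by
      by_cases hch : S.χ k q ω = true
      · have h1 := (hupd q hch).2
        have h2 := hdiag k q ω
        have hqh : v q = h := by rw [hh, hq]
        rw [hqh] at h1
        nlinarith [h1, h2, hHh]
      · have heqq : w q = v q := by
          rw [hw]
          show S.state x0 (k + 1) ω q = _
          simp [RandConsensus.state, hch]
          rfl
        have hqh : v q = h := by rw [hh, hq]
        rw [heqq, hqh]
        nlinarith [hHh, haStar1]
    have hsup : w p ≤ Finset.univ.sup' ne0 w := Finset.le_sup' w (Finset.mem_univ p)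
    have hinf : Finset.univ.inf' ne0 w ≤ w q := Finset.inf'_le w (Finset.mem_univ q)
    have hsv : S.spread v = H - h := rfl
    have hsw : S.spread w = Finset.univ.sup' ne0 w - Finset.univ.inf' ne0 w := rfl
    rw [hsv, hsw]
    nlinarith [hsup, hinf, hup, hdown]
  -- iterated bound
  have hpow : ∀ (x0 : Fin S.n → ℝ) (ω : Ω) (k : ℕ),
      c ^ k * S.spread x0 ≤ S.spread (S.state x0 k ω) := by
    intro x0 ω k
    induction k with
    | zero => simp [RandConsensus.state]
    | succ k ih =>
        calc c ^ (k + 1) * S.spread x0 = c * (c ^ k * S.spread x0) := by ring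
          _ ≤ c * S.spread (S.state x0 k ω) := by
              exact mul_le_mul_of_nonneg_left ih hc.le
          _ ≤ S.spread (S.state x0 (k + 1) ω) := key x0 ω k
  -- Borel-Cantelli part
  set s : ℕ → Set Ω := fun k => ⋃ i : Fin S.n, {ω | S.χ k i ω = true} with hs_def
  have hsum0 : ∑' k, S.μ (s k) ≠ ⊤ := by
    have hle : ∀ k, S.μ (s k) ≤ (S.n : ENNReal) * ENNReal.ofReal (S.P k) := by
      intro k
      calc S.μ (s k) ≤ ∑ i : Fin S.n, S.μ {ω | S.χ k i ω = true} :=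
            measure_iUnion_fintype_le _ _
        _ = ∑ _i : Fin S.n, ENNReal.ofReal (S.P k) := by
            refine Finset.sum_congr rfl fun i _ => S.hχP k i
        _ = (S.n : ENNReal) * ENNReal.ofReal (S.P k) := by
            simp [Finset.sum_const, mul_comm]
    refine ne_top_of_le_ne_top ?_ (ENNReal.tsum_le_tsum hle)
    rw [ENNReal.tsum_mul_left]
    have : ∑' k, ENNReal.ofReal (S.P k) = ENNReal.ofReal (∑' k, S.P k) :=
      (ENNReal.ofReal_tsum_of_nonneg S.hP0 hsum).symm
    rw [this]
    exact ENNReal.mul_ne_top (by simp) ENNReal.ofReal_ne_top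
  have hlimsup : S.μ (limsup s atTop) = 0 := measure_limsup_atTop_eq_zero hsum0
  have part1 : ∀ x0 : Fin S.n → ℝ, 0 < S.spread x0 →
      S.μ {ω | Tendsto (fun k => S.spread (S.state x0 k ω)) atTop (nhds 0)} = 0 := by
    intro x0 hx0
    refine measure_mono_null ?_ hlimsup
    intro ω hω
    by_contra hmem
    rw [Set.mem_setOf_eq] at hω
    have hnot : ∀ᶠ k in atTop, ω ∉ s k := by
      rw [← Filter.not_frequently]
      intro hfreq
      exact hmem (mem_limsup_iff_frequently_mem.mpr hfreq)
    obtain ⟨K, hK⟩ := eventually_atTop.mp hnot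
    have hχfalse : ∀ k ≥ K, ∀ i : Fin S.n, S.χ k i ω = false := by
      intro k hk i
      have := hK k hk
      rw [hs_def] at this
      simp only [Set.mem_iUnion, Set.mem_setOf_eq, not_exists] at this
      exact Bool.eq_false_iff.mpr (this i)
    have heq : ∀ k ≥ K, S.state x0 k ω = S.state x0 K ω := by
      intro k hk
      induction k, hk using Nat.le_induction with
      | base => rfl
      | succ k hk ih =>
          rw [← ih]
          funext i
          show (if S.χ k i ω then _ else S.state x0 k ω i) = S.state x0 k ω i
          rw [hχfalse k hk i]
          simp
    set c0 : ℝ := S.spread (S.state x0 K ω) with hc0_def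
    have hc0 : 0 < c0 := lt_of_lt_of_le (by positivity) (hpow x0 ω K)
    have hev : ∀ᶠ k in atTop, S.spread (S.state x0 k ω) < c0 :=
      hω.eventually_lt_const hc0
    obtain ⟨K', hK'⟩ := eventually_atTop.mp hev
    have h1 := hK' (max K K') (le_max_right _ _)
    rw [heq (max K K') (le_max_left _ _)] at h1
    exact lt_irrefl _ h1
  refine ⟨part1, ?_⟩
  -- second part: the bad set lies in a strict hyperplane
  have hker : LinearMap.ker (LinearMap.proj (⟨0, by omega⟩ : Fin S.n) -
      LinearMap.proj ⟨1, by omega⟩ : (Fin S.n → ℝ) →ₗ[ℝ] ℝ) ≠ ⊤ := by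
    intro htop
    have h1 : (LinearMap.proj (⟨0, by omega⟩ : Fin S.n) -
        LinearMap.proj ⟨1, by omega⟩ : (Fin S.n → ℝ) →ₗ[ℝ] ℝ)
        (Pi.single (⟨0, by omega⟩ : Fin S.n) (1 : ℝ)) = 0 := by
      rw [← LinearMap.mem_ker, htop]; trivial
    rw [LinearMap.sub_apply, LinearMap.proj_apply, LinearMap.proj_apply,
      Pi.single_eq_same, Pi.single_eq_of_ne (by simp [Fin.ext_iff]), sub_zero] at h1
    norm_num at h1
  refine measure_mono_null ?_ (Measure.addHaar_submodule volume _ hker)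
  intro x0 hx0
  rw [Set.mem_setOf_eq] at hx0
  have hsle : S.spread x0 ≤ 0 := by
    by_contra hpos
    exact hx0 (part1 x0 (lt_of_not_ge hpos))
  have hconst : x0 ⟨0, by omega⟩ = x0 ⟨1, by omega⟩ := by
    have hvH : ∀ j, x0 j ≤ Finset.univ.sup' ne0 x0 :=
      fun j => Finset.le_sup' x0 (Finset.mem_univ j)
    have hvh : ∀ j, Finset.univ.inf' ne0 x0 ≤ x0 j :=
      fun j => Finset.inf'_le x0 (Finset.mem_univ j)
    have hss : S.spread x0 = Finset.univ.sup' ne0 x0 - Finset.univ.inf' ne0 x0 := rfl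
    rw [hss] at hsle
    have h1 := hvH (⟨0, by omega⟩ : Fin S.n)
    have h2 := hvh (⟨0, by omega⟩ : Fin S.n)
    have h3 := hvH (⟨1, by omega⟩ : Fin S.n)
    have h4 := hvh (⟨1, by omega⟩ : Fin S.n)
    linarith
  show x0 ∈ LinearMap.ker _
  rw [LinearMap.mem_ker, LinearMap.sub_apply, LinearMap.proj_apply, LinearMap.proj_apply,
    hconst, sub_self]
end

section
/- Suppose P(the joint graph of {G_k} on [0,∞) is acyclic)=1 and the random graph process {G_k} is stochastically infinitely quasi-strongly connected with node sequence 0=C_0<C_1<⋯ and constant 0<q<1. Then the randomized consensus algorithm achieves global almost sure consensus if ∑_{s=0}^∞ P̃_s = ∞, where P̃_s = inf_{C_s ≤ α < C_{s+1}} P_α. -/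
open MeasureTheory ProbabilityTheory Filter

/-- `P̃_s`: the infimum of `P_α` over `α ∈ [C_s, C_{s+1})`. -/
noncomputable def Ptilde (P : ℕ → ℝ) (C : ℕ → ℕ) (s : ℕ) : ℝ :=
  sInf {r : ℝ | ∃ α : ℕ, C s ≤ α ∧ α < C (s + 1) ∧ r = P α}

/-! ### Auxiliary development for the proof -/

section PtildeFacts

variable {P : ℕ → ℝ} {C : ℕ → ℕ}

lemma Ptilde_le (h0 : ∀ k, 0 ≤ P k) {s α : ℕ} (h1 : C s ≤ α) (h2 : α < C (s + 1)) :
    Ptilde P C s ≤ P α :=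
  csInf_le ⟨0, fun r ⟨β, _, _, hβ⟩ => hβ ▸ h0 β⟩ ⟨α, h1, h2, rfl⟩

lemma Ptilde_nonneg (h0 : ∀ k, 0 ≤ P k) (hC : StrictMono C) (s : ℕ) :
    0 ≤ Ptilde P C s :=
  le_csInf ⟨P (C s), C s, le_refl _, hC (Nat.lt_succ_self s), rfl⟩
    fun r ⟨β, _, _, hβ⟩ => hβ ▸ h0 β

lemma Ptilde_lt_one (h0 : ∀ k, 0 ≤ P k) (h1 : ∀ k, P k < 1) (hC : StrictMono C) (s : ℕ) :
    Ptilde P C s < 1 :=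
  lt_of_le_of_lt (Ptilde_le h0 (le_refl _) (hC (Nat.lt_succ_self s))) (h1 _)

end PtildeFacts

section Depends

/-- A set of trajectories that depends only on finitely many coordinates is measurable. -/
lemma measurableSet_of_depends_on {γ : Type*} [MeasurableSpace γ] [Finite γ]
    [MeasurableSingletonClass γ] (K : Finset ℕ) (T : Set (ℕ → γ))
    (hT : ∀ f g : ℕ → γ, (∀ k ∈ K, f k = g k) → f ∈ T → g ∈ T) : MeasurableSet T := by
  classical
  have hΦ : Measurable (fun (f : ℕ → γ) (k : K) => f (k : ℕ)) :=
    measurable_pi_lambda _ fun k => measurable_pi_apply _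
  have hrw : T = (fun (f : ℕ → γ) (k : K) => f (k : ℕ)) ⁻¹'
      ((fun (f : ℕ → γ) (k : K) => f (k : ℕ)) '' T) := by
    apply Set.Subset.antisymm (Set.subset_preimage_image _ _)
    rintro f ⟨g, hg, hfg⟩
    exact hT g f (fun k hk => congrFun hfg ⟨k, hk⟩) hg
  rw [hrw]
  exact hΦ MeasurableSet.of_discrete

end Depends

namespace RandConsensus

variable {Ω : Type*} [MeasurableSpace Ω] (S : RandConsensus Ω)

/-- `α` is the first time in the `m`-th interval at which node `i` has an incoming arc. -/
def minArc (i : Fin S.n) (C : ℕ → ℕ) (m : ℕ) (ω : Ω) (α : ℕ) : Prop :=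
  C m ≤ α ∧ α < C (m + 1) ∧ (∃ j, S.E α ω j i = true) ∧
    ∀ β, C m ≤ β → β < α → ¬ ∃ j, S.E β ω j i = true

/-- The event that the joint graph on the `m`-th interval is QSC. -/
def QSCev (C : ℕ → ℕ) (m : ℕ) : Set Ω :=
  {ω | IsQSC (S.jointRel ω (Set.Ico (C m) (C (m + 1))))}

/-- The event that node `i`'s decision at time `α` is `false`. -/
def chiFail (i : Fin S.n) (α : ℕ) : Set Ω := {ω | S.χ α i ω = false}

/-- The event `minArc i C m · α`. -/
def minArcEv (i : Fin S.n) (C : ℕ → ℕ) (m α : ℕ) : Set Ω := {ω | S.minArc i C m ω α}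

/-- The event that node `i` has an in-arc in the `m`-th interval but does not fire
at the first such time. -/
def FailEv (i : Fin S.n) (C : ℕ → ℕ) (m : ℕ) : Set Ω :=
  {ω | ∃ α, S.minArc i C m ω α ∧ S.χ α i ω = false}

/-- The bad event for node `i` and interval `m`. -/
def Dev (i : Fin S.n) (C : ℕ → ℕ) (m : ℕ) : Set Ω :=
  (S.QSCev C m)ᶜ ∪ S.FailEv i C m

/-! #### Deterministic lemmas -/

lemma eta_le_one (ω : Ω) : S.η ≤ 1 := by
  have h1 := S.hasum 0 ⟨0, by have := S.hn; omega⟩ ω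
  have h2 := S.hηa 0 ⟨0, by have := S.hn; omega⟩ ω
  calc S.η ≤ S.a 0 _ _ ω := h2 _ (Finset.mem_insert_self _ _)
    _ ≤ _ := Finset.single_le_sum (f := fun j => S.a 0 _ j ω)
        (fun j hj => le_trans (le_of_lt S.hη) (h2 j hj)) (Finset.mem_insert_self _ _)
    _ = 1 := h1

lemma state_zero (x0 : Fin S.n → ℝ) (ω : Ω) : S.state x0 0 ω = x0 := rfl

lemma state_succ (x0 : Fin S.n → ℝ) (k : ℕ) (ω : Ω) (i : Fin S.n) :
    S.state x0 (k + 1) ω i =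
      if S.χ k i ω then ∑ j ∈ S.Nbr k ω i, S.a k i j ω * S.state x0 k ω j
      else S.state x0 k ω i := rfl

lemma state_const_of_no_inarc (x0 : Fin S.n → ℝ) (ω : Ω) (i : Fin S.n)
    (hno : ∀ k j, ¬ S.E k ω j i = true) (k : ℕ) : S.state x0 k ω i = x0 i := by
  induction k with
  | zero => rfl
  | succ k ih =>
    have hN : S.Nbr k ω i = {i} := by
      unfold Nbr
      have he : (Finset.univ.filter fun j => S.E k ω j i = true) = ∅ :=
        Finset.filter_eq_empty_iff.mpr fun j _ => hno k j
      rw [he]; rfl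
    have h1 : S.a k i i ω = 1 := by
      have h := S.hasum k i ω
      rw [show (insert i (Finset.univ.filter fun j' => S.E k ω j' i = true)) = {i} from hN,
        Finset.sum_singleton] at h
      exact h
    rw [state_succ, hN, Finset.sum_singleton, h1, one_mul, ih, ite_self]

/-- One-step bound: the new state value stays within any bound valid for all neighbors. -/
lemma abs_step_le (x0 : Fin S.n → ℝ) (ω : Ω) (k : ℕ) (i : Fin S.n) (c B : ℝ)
    (hB : ∀ j ∈ S.Nbr k ω i, |S.state x0 k ω j - c| ≤ B) :
    |S.state x0 (k + 1) ω i - c| ≤ B := by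
  have hiN : i ∈ S.Nbr k ω i := Finset.mem_insert_self _ _
  rw [state_succ]
  split
  · have hsum : ∑ j ∈ S.Nbr k ω i, S.a k i j ω = 1 := S.hasum k i ω
    have hpos : ∀ j ∈ S.Nbr k ω i, 0 ≤ S.a k i j ω :=
      fun j hj => le_trans S.hη.le (S.hηa k i ω j hj)
    have hrw : (∑ j ∈ S.Nbr k ω i, S.a k i j ω * S.state x0 k ω j) - c
        = ∑ j ∈ S.Nbr k ω i, S.a k i j ω * (S.state x0 k ω j - c) := by
      simp only [mul_sub, Finset.sum_sub_distrib, ← Finset.sum_mul, hsum, one_mul]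
    rw [hrw]
    calc |∑ j ∈ S.Nbr k ω i, S.a k i j ω * (S.state x0 k ω j - c)|
        ≤ ∑ j ∈ S.Nbr k ω i, |S.a k i j ω * (S.state x0 k ω j - c)| :=
          Finset.abs_sum_le_sum_abs _ _
      _ ≤ ∑ j ∈ S.Nbr k ω i, S.a k i j ω * B := by
          apply Finset.sum_le_sum
          intro j hj
          rw [abs_mul, abs_of_nonneg (hpos j hj)]
          exact mul_le_mul_of_nonneg_left (hB j hj) (hpos j hj)
      _ = B := by rw [← Finset.sum_mul, hsum, one_mul]
  · exact hB i hiN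

/-- One-step contraction when the node fires and has a strict neighbor. -/
lemma abs_step_contract (x0 : Fin S.n → ℝ) (ω : Ω) (k : ℕ) (i : Fin S.n) (c ε : ℝ)
    (hε : 0 ≤ ε) (j0 : Fin S.n) (hj0 : j0 ∈ S.Nbr k ω i) (hj0i : j0 ≠ i)
    (hfire : S.χ k i ω = true)
    (hnb : ∀ j ∈ S.Nbr k ω i, j ≠ i → |S.state x0 k ω j - c| ≤ ε) :
    |S.state x0 (k + 1) ω i - c| ≤
      (1 - S.η) * max (|S.state x0 k ω i - c|) ε + ε := by
  have hiN : i ∈ S.Nbr k ω i := Finset.mem_insert_self _ _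
  have hsum : ∑ j ∈ S.Nbr k ω i, S.a k i j ω = 1 := S.hasum k i ω
  have hpos : ∀ j ∈ S.Nbr k ω i, 0 ≤ S.a k i j ω :=
    fun j hj => le_trans S.hη.le (S.hηa k i ω j hj)
  set D : ℝ := |S.state x0 k ω i - c| with hD
  set B : ℝ := max D ε with hBdef
  have hDB : D ≤ B := le_max_left _ _
  have hB0 : 0 ≤ B := le_trans (abs_nonneg _) hDB
  have hεB : ε ≤ B := le_max_right _ _
  have hj0e : j0 ∈ (S.Nbr k ω i).erase i := Finset.mem_erase.mpr ⟨hj0i, hj0⟩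
  have herase : S.a k i i ω + ∑ j ∈ (S.Nbr k ω i).erase i, S.a k i j ω = 1 :=
    (Finset.add_sum_erase _ (fun j => S.a k i j ω) hiN).trans hsum
  have haiη : S.a k i i ω ≤ 1 - S.η := by
    have h1 : S.η ≤ S.a k i j0 ω := S.hηa k i ω j0 hj0
    have h2 : S.a k i j0 ω ≤ ∑ j ∈ (S.Nbr k ω i).erase i, S.a k i j ω :=
      Finset.single_le_sum (fun j hj => hpos j (Finset.mem_of_mem_erase hj)) hj0e
    linarith
  have hai0 : 0 ≤ S.a k i i ω := hpos i hiN
  rw [state_succ, if_pos hfire]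
  have hrw : (∑ j ∈ S.Nbr k ω i, S.a k i j ω * S.state x0 k ω j) - c
      = S.a k i i ω * (S.state x0 k ω i - c)
        + ∑ j ∈ (S.Nbr k ω i).erase i, S.a k i j ω * (S.state x0 k ω j - c) := by
    have h1 : (∑ j ∈ S.Nbr k ω i, S.a k i j ω * S.state x0 k ω j) - c
        = ∑ j ∈ S.Nbr k ω i, S.a k i j ω * (S.state x0 k ω j - c) := by
      simp only [mul_sub, Finset.sum_sub_distrib, ← Finset.sum_mul, hsum, one_mul]
    rw [h1, ← Finset.add_sum_erase _ (fun j => S.a k i j ω * (S.state x0 k ω j - c)) hiN]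
  rw [hrw]
  have hb2 : |∑ j ∈ (S.Nbr k ω i).erase i, S.a k i j ω * (S.state x0 k ω j - c)|
      ≤ (1 - S.a k i i ω) * ε := by
    calc |∑ j ∈ (S.Nbr k ω i).erase i, S.a k i j ω * (S.state x0 k ω j - c)|
        ≤ ∑ j ∈ (S.Nbr k ω i).erase i, |S.a k i j ω * (S.state x0 k ω j - c)| :=
          Finset.abs_sum_le_sum_abs _ _
      _ ≤ ∑ j ∈ (S.Nbr k ω i).erase i, S.a k i j ω * ε := by
          apply Finset.sum_le_sum
          intro j hj
          have hjN := Finset.mem_of_mem_erase hj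
          rw [abs_mul, abs_of_nonneg (hpos j hjN)]
          exact mul_le_mul_of_nonneg_left
            (hnb j hjN (Finset.ne_of_mem_erase hj)) (hpos j hjN)
      _ = (1 - S.a k i i ω) * ε := by rw [← Finset.sum_mul]; ring_nf; nlinarith [herase]
  calc |S.a k i i ω * (S.state x0 k ω i - c)
        + ∑ j ∈ (S.Nbr k ω i).erase i, S.a k i j ω * (S.state x0 k ω j - c)|
      ≤ S.a k i i ω * D + (1 - S.a k i i ω) * ε := by
        refine le_trans (abs_add_le _ _) ?_
        rw [abs_mul, abs_of_nonneg hai0]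
        exact add_le_add le_rfl hb2
    _ ≤ (1 - S.η) * B + ε := by nlinarith

lemma spread_nonneg (v : Fin S.n → ℝ) : 0 ≤ S.spread v := by
  unfold spread
  have h0 : (⟨0, by have := S.hn; omega⟩ : Fin S.n) ∈ Finset.univ := Finset.mem_univ _
  have h1 := Finset.inf'_le v h0
  have h2 := Finset.le_sup' v h0
  linarith

lemma spread_le_sum (v : Fin S.n → ℝ) (c : ℝ) :
    S.spread v ≤ 2 * ∑ j : Fin S.n, |v j - c| := by
  unfold spread
  have h1 : Finset.univ.sup' ⟨⟨0, by have := S.hn; omega⟩, Finset.mem_univ _⟩ v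
      ≤ c + ∑ j : Fin S.n, |v j - c| := by
    apply Finset.sup'_le
    intro b _
    have h2 : |v b - c| ≤ ∑ j : Fin S.n, |v j - c| :=
      Finset.single_le_sum (f := fun j => |v j - c|) (fun j _ => abs_nonneg _)
        (Finset.mem_univ b)
    have h3 : v b - c ≤ |v b - c| := le_abs_self _
    linarith
  have h2 : c - ∑ j : Fin S.n, |v j - c| ≤
      Finset.univ.inf' ⟨⟨0, by have := S.hn; omega⟩, Finset.mem_univ _⟩ v := by
    apply Finset.le_inf'
    intro b _
    have h2 : |v b - c| ≤ ∑ j : Fin S.n, |v j - c| :=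
      Finset.single_le_sum (f := fun j => |v j - c|) (fun j _ => abs_nonneg _)
        (Finset.mem_univ b)
    have h3 : -|v b - c| ≤ v b - c := neg_abs_le _
    linarith
  linarith

/-- The master deterministic convergence lemma. -/
lemma det_tendsto (x0 : Fin S.n → ℝ) (ω : Ω)
    (hacyc : IsAcyclicRel (S.jointRel ω Set.univ))
    (C : ℕ → ℕ) (hCmono : StrictMono C)
    (hio : ∀ (i : Fin S.n) (M : ℕ), ∃ m, M ≤ m ∧ ω ∈ S.QSCev C m ∧ ω ∉ S.FailEv i C m) :
    Tendsto (fun k => S.spread (S.state x0 k ω)) atTop (nhds 0) := by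
  classical
  set jrel : Fin S.n → Fin S.n → Prop := S.jointRel ω Set.univ with hjrel
  have exists_last : ∀ (R : Fin S.n → Fin S.n → Prop) (x y : Fin S.n),
      Relation.ReflTransGen R x y → x ≠ y → ∃ u, R u y := by
    intro R x y h hne
    induction h with
    | refl => exact absurd rfl hne
    | tail _ hbc _ => exact ⟨_, hbc⟩
  have hmono : ∀ m (u v : Fin S.n),
      S.jointRel ω (Set.Ico (C m) (C (m + 1))) u v → jrel u v := by
    rintro m u v ⟨k, _, he⟩; exact ⟨k, trivial, he⟩
  obtain ⟨m0, _, hq0, _⟩ := hio ⟨0, by have := S.hn; omega⟩ 0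
  obtain ⟨r, hr⟩ := hq0
  have hrtot : ∀ j, Relation.ReflTransGen jrel r j :=
    fun j => Relation.ReflTransGen.mono (hmono m0) _ _ (hr j)
  have hnoin_r : ∀ k j, ¬ S.E k ω j r = true := by
    intro k j hE
    exact hacyc r (Relation.TransGen.tail' (hrtot j) ⟨k, trivial, hE⟩)
  set c : ℝ := x0 r with hc
  have hrconst : ∀ k, S.state x0 k ω r = c := S.state_const_of_no_inarc x0 ω r hnoin_r
  have hroot_eq : ∀ m, ω ∈ S.QSCev C m → ∀ i : Fin S.n, (∃ k j, S.E k ω j i = true) →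
      ∃ α, C m ≤ α ∧ α < C (m + 1) ∧ ∃ j, S.E α ω j i = true := by
    intro m hm i hin
    obtain ⟨rm, hrm⟩ := hm
    have hrmtot : ∀ j, Relation.ReflTransGen jrel rm j :=
      fun j => Relation.ReflTransGen.mono (hmono m) _ _ (hrm j)
    have hrm_ne : rm ≠ i := by
      rintro rfl
      obtain ⟨k0, j0, hk0⟩ := hin
      exact hacyc rm (Relation.TransGen.tail' (hrmtot j0) ⟨k0, trivial, hk0⟩)
    obtain ⟨u, α, hα, he⟩ := exists_last _ rm i (hrm i) hrm_ne
    exact ⟨α, hα.1, hα.2, u, he⟩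
  have hwf : WellFounded (Relation.TransGen jrel) := by
    have h1 : IsTrans (Fin S.n) (Relation.TransGen jrel) := ⟨fun _ _ _ h1 h2 => h1.trans h2⟩
    have h2 : IsIrrefl (Fin S.n) (Relation.TransGen jrel) := ⟨hacyc⟩
    exact Finite.wellFounded_of_trans_of_irrefl _
  have hη1 : S.η ≤ 1 := S.eta_le_one ω
  have main : ∀ i : Fin S.n, Tendsto (fun k => S.state x0 k ω i) atTop (nhds c) := by
    refine fun i => hwf.induction
      (C := fun i => Tendsto (fun k => S.state x0 k ω i) atTop (nhds c)) i ?_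
    intro i IH
    by_cases hin : ∃ k j, S.E k ω j i = true
    swap
    · have hnoin : ∀ k j, ¬ S.E k ω j i = true := fun k j h => hin ⟨k, j, h⟩
      have hconst := S.state_const_of_no_inarc x0 ω i hnoin
      have hieq : i = r := by
        by_contra hne
        obtain ⟨u, k, _, hE⟩ := exists_last jrel r i (hrtot i) (fun h => hne h.symm)
        exact hnoin k u hE
      have : (fun k => S.state x0 k ω i) = fun _ => c := by
        funext k; rw [hconst k, hieq]
      rw [this]
      exact tendsto_const_nhds
    · rw [Metric.tendsto_atTop]
      intro ε hε
      set ε' : ℝ := S.η * ε / (2 * (1 + S.η)) with hε'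
      have hε'pos : 0 < ε' := by
        apply div_pos (mul_pos S.hη hε)
        nlinarith [S.hη]
      set J : Finset (Fin S.n) := Finset.univ.filter (fun j => ∃ k, S.E k ω j i = true)
        with hJ
      have hJconv : ∀ j ∈ J, Tendsto (fun k => S.state x0 k ω j) atTop (nhds c) := by
        intro j hj
        obtain ⟨k, hk⟩ : ∃ k, S.E k ω j i = true := (Finset.mem_filter.mp hj).2
        exact IH j (Relation.TransGen.single ⟨k, trivial, hk⟩)
      have hev : ∀ᶠ k in atTop, ∀ j ∈ J, |S.state x0 k ω j - c| ≤ ε' := by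
        rw [eventually_all_finset]
        intro j hj
        have h3 := (hJconv j hj) (Metric.ball_mem_nhds c hε'pos)
        filter_upwards [h3] with k hk
        rw [Set.mem_preimage, Metric.mem_ball, Real.dist_eq] at hk
        exact hk.le
      obtain ⟨K, hK⟩ := eventually_atTop.mp hev
      set D : ℕ → ℝ := fun k => |S.state x0 k ω i - c| with hDd
      set y : ℕ → ℝ := fun k => max (D k - ε' / S.η) 0 with hyd
      have hy0 : ∀ k, 0 ≤ y k := fun k => le_max_right _ _
      have hεη : ε' ≤ ε' / S.η := by
        rw [le_div_iff₀ S.hη]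
        nlinarith [hε'pos.le, hη1]
      have hnble : ∀ k, K ≤ k → ∀ j ∈ S.Nbr k ω i, j ≠ i → |S.state x0 k ω j - c| ≤ ε' := by
        intro k hk j hj hji
        rcases Finset.mem_insert.mp hj with h | h
        · exact absurd h hji
        · have hjE : S.E k ω j i = true := (Finset.mem_filter.mp h).2
          have hjJ : j ∈ J := Finset.mem_filter.mpr ⟨Finset.mem_univ _, ⟨k, hjE⟩⟩
          exact hK k hk j hjJ
      have hstep : ∀ k, K ≤ k → D (k + 1) ≤ max (D k) ε' := by
        intro k hk
        apply S.abs_step_le x0 ω k i c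
        intro j hj
        by_cases hji : j = i
        · rw [hji]; exact le_max_left _ _
        · exact le_trans (hnble k hk j hj hji) (le_max_right _ _)
      have hymono : ∀ k, K ≤ k → y (k + 1) ≤ y k := by
        intro k hk
        have h1 := hstep k hk
        have h2 : D (k + 1) - ε' / S.η ≤ y k := by
          rcases le_total (D k) (ε' / S.η) with h | h
          · have : max (D k) ε' ≤ ε' / S.η := max_le h hεη
            have := hy0 k
            linarith
          · have : max (D k) ε' = D k := max_eq_left (le_trans hεη h)
            rw [this] at h1
            exact le_trans (by linarith) (le_max_left (D k - ε' / S.η) 0)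
        exact max_le h2 (hy0 k)
      have hymono' : ∀ k1 k2, K ≤ k1 → k1 ≤ k2 → y k2 ≤ y k1 := by
        intro k1 k2 hK1 h12
        induction k2, h12 using Nat.le_induction with
        | base => exact le_rfl
        | succ n hn ih => exact le_trans (hymono n (le_trans hK1 hn)) ih
      have hcontr : ∀ α, K ≤ α → (∃ j, S.E α ω j i = true) → S.χ α i ω = true →
          y (α + 1) ≤ (1 - S.η) * y α := by
        rintro α hα ⟨j1, hj1⟩ hfire
        have hj1i : j1 ≠ i := by
          rintro rfl
          rw [S.hEirrefl] at hj1
          exact Bool.false_ne_true hj1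
        have hj1N : j1 ∈ S.Nbr α ω i :=
          Finset.mem_insert.mpr (Or.inr (Finset.mem_filter.mpr ⟨Finset.mem_univ _, hj1⟩))
        have h1 := S.abs_step_contract x0 ω α i c ε' hε'pos.le j1 hj1N hj1i hfire
          (hnble α hα)
        have hDc : D (α + 1) ≤ (1 - S.η) * max (D α) ε' + ε' := h1
        have hd : S.η * (ε' / S.η) = ε' := mul_div_cancel₀ _ (ne_of_gt S.hη)
        rcases le_total (D α) (ε' / S.η) with h | h
        · have hm1 : max (D α) ε' ≤ ε' / S.η := max_le h hεη
          have h2 : (1 - S.η) * max (D α) ε' ≤ (1 - S.η) * (ε' / S.η) :=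
            mul_le_mul_of_nonneg_left hm1 (by linarith)
          have h3 : (1 - S.η) * (ε' / S.η) + ε' ≤ ε' / S.η := by nlinarith [hd]
          have hy1 : y (α + 1) = 0 := max_eq_right (by nlinarith [hDc])
          rw [hy1]
          exact mul_nonneg (by linarith) (hy0 α)
        · have hm1 : max (D α) ε' = D α := max_eq_left (le_trans hεη h)
          rw [hm1] at hDc
          have hyα : y α = D α - ε' / S.η := max_eq_left (by linarith)
          rw [hyα]
          apply max_le
          · have hee : (1 - S.η) * (D α - ε' / S.η)
                = (1 - S.η) * D α + ε' - ε' / S.η := by linear_combination hd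
            linarith [hDc]
          · exact mul_nonneg (by linarith) (by linarith)
      have hinf : ∀ M, ∃ α, M ≤ α ∧ (∃ j, S.E α ω j i = true) ∧ S.χ α i ω = true := by
        intro M
        obtain ⟨m, hm, hqsc, hnf⟩ := hio i M
        obtain ⟨α, hα1, hα2, hj⟩ := hroot_eq m hqsc i hin
        have hex : ∃ β, C m ≤ β ∧ β < C (m + 1) ∧ ∃ j, S.E β ω j i = true :=
          ⟨α, hα1, hα2, hj⟩
        set β := Nat.find hex with hβd
        obtain ⟨hβ1, hβ2, hβ3⟩ := Nat.find_spec hex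
        have hmarc : S.minArc i C m ω β := by
          refine ⟨hβ1, hβ2, hβ3, fun γ h1 h2 hexj => ?_⟩
          exact Nat.find_min hex h2 ⟨h1, lt_trans h2 hβ2, hexj⟩
        have hfire : S.χ β i ω = true := by
          by_contra hf
          exact hnf ⟨β, hmarc, by rwa [Bool.not_eq_true] at hf⟩
        exact ⟨β, le_trans (le_trans hm hCmono.le_apply) hβ1, hβ3, hfire⟩
      have hdecay : ∀ jn : ℕ, ∃ T, K ≤ T ∧ y T ≤ (1 - S.η) ^ jn * y K := by
        intro jn
        induction jn with
        | zero => exact ⟨K, le_rfl, by simp⟩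
        | succ n ihn =>
          obtain ⟨T, hT, hyT⟩ := ihn
          obtain ⟨α, hα, harc, hfire⟩ := hinf T
          refine ⟨α + 1, by omega, ?_⟩
          have h1 := hcontr α (le_trans hT hα) harc hfire
          have h2 := hymono' T α hT hα
          calc y (α + 1) ≤ (1 - S.η) * y α := h1
            _ ≤ (1 - S.η) * ((1 - S.η) ^ n * y K) := by
                apply mul_le_mul_of_nonneg_left (le_trans h2 hyT) (by linarith)
            _ = (1 - S.η) ^ (n + 1) * y K := by ring
      have hgeo : ∃ jn : ℕ, (1 - S.η) ^ jn * y K ≤ ε' := by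
        rcases eq_or_lt_of_le (hy0 K) with h0 | h0
        · exact ⟨0, by rw [← h0]; simpa using hε'pos.le⟩
        · have h1 : (0:ℝ) ≤ 1 - S.η := by linarith
          have h2 : (1:ℝ) - S.η < 1 := by linarith [S.hη]
          have h3 := tendsto_pow_atTop_nhds_zero_of_lt_one h1 h2
          have h4 : ∀ᶠ jn in atTop, (1 - S.η) ^ jn < ε' / y K :=
            h3 (Iio_mem_nhds (by positivity))
          obtain ⟨jn, hjn⟩ := h4.exists
          exact ⟨jn, by rw [← le_div_iff₀ h0]; exact hjn.le⟩
      obtain ⟨jn, hjn⟩ := hgeo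
      obtain ⟨T, hTK, hyT⟩ := hdecay jn
      refine ⟨T, fun k hk => ?_⟩
      have hyk : y k ≤ ε' := le_trans (hymono' T k hTK hk) (le_trans hyT hjn)
      have hDy : D k - ε' / S.η ≤ y k := le_max_left _ _
      have hc1 : ε' / S.η + ε' = ε / 2 := by
        have h1 : S.η ≠ 0 := ne_of_gt S.hη
        have h2 : (1:ℝ) + S.η ≠ 0 := ne_of_gt (by linarith [S.hη])
        rw [hε']
        field_simp
      rw [Real.dist_eq]
      have : D k < ε := by
        have : D k ≤ ε / 2 := by linarith
        linarith
      exact this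
  have hg : Tendsto (fun k => ∑ j : Fin S.n, |S.state x0 k ω j - c|) atTop (nhds 0) := by
    have h1 : ∀ j : Fin S.n, Tendsto (fun k => |S.state x0 k ω j - c|) atTop
        (nhds 0) := by
      intro j
      have := ((main j).sub_const c).abs
      simpa using this
    have := tendsto_finset_sum (Finset.univ : Finset (Fin S.n)) (fun j _ => h1 j)
    simpa using this
  apply squeeze_zero (fun k => S.spread_nonneg _) (fun k => S.spread_le_sum _ c)
  have := hg.const_mul (2:ℝ)
  simpa using this

/-! #### Measurability -/

/-- The bundled graph-and-weights map. -/
def EaMap (ω : Ω) : (ℕ → Fin S.n → Fin S.n → Bool) × (ℕ → Fin S.n → Fin S.n → ℝ) :=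
  ((fun k u v => S.E k ω u v), (fun k i j => S.a k i j ω))

/-- The bundled decision map. -/
def chiMap (ω : Ω) : ℕ × Fin S.n → Bool := fun p => S.χ p.1 p.2 ω

lemma measurable_EaMap : Measurable S.EaMap := by
  apply Measurable.prod
  · exact measurable_pi_lambda _ fun k => measurable_pi_lambda _ fun u =>
      measurable_pi_lambda _ fun v => S.hE k u v
  · exact measurable_pi_lambda _ fun k => measurable_pi_lambda _ fun i =>
      measurable_pi_lambda _ fun j => S.ha k i j

lemma measurable_chiMap : Measurable S.chiMap :=
  measurable_pi_lambda _ fun p => S.hχ p.1 p.2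

lemma measurableSet_comap_QSCev (C : ℕ → ℕ) (m : ℕ) :
    MeasurableSet[MeasurableSpace.comap S.EaMap inferInstance] (S.QSCev C m) := by
  rw [MeasurableSpace.measurableSet_comap]
  refine ⟨Prod.fst ⁻¹' {e : ℕ → Fin S.n → Fin S.n → Bool |
    IsQSC (fun u v => ∃ k ∈ Set.Ico (C m) (C (m + 1)), e k u v = true)}, ?_, rfl⟩
  apply measurable_fst
  apply measurableSet_of_depends_on (Finset.Ico (C m) (C (m + 1)))
  intro f g hfg hf
  have hrel : (fun u v => ∃ k ∈ Set.Ico (C m) (C (m + 1)), g k u v = true)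
      = (fun u v => ∃ k ∈ Set.Ico (C m) (C (m + 1)), f k u v = true) := by
    funext u v
    apply propext
    constructor <;> rintro ⟨k, hk, he⟩ <;> refine ⟨k, hk, ?_⟩ <;>
      rw [← he, hfg k (Finset.mem_Ico.mpr ⟨hk.1, hk.2⟩)]
  simp only [Set.mem_setOf_eq] at hf ⊢
  rw [hrel]
  exact hf

lemma measurableSet_comap_minArcEv (i : Fin S.n) (C : ℕ → ℕ) (m α : ℕ) :
    MeasurableSet[MeasurableSpace.comap S.EaMap inferInstance] (S.minArcEv i C m α) := by
  rw [MeasurableSpace.measurableSet_comap]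
  refine ⟨Prod.fst ⁻¹' {e : ℕ → Fin S.n → Fin S.n → Bool |
    C m ≤ α ∧ α < C (m + 1) ∧ (∃ j, e α j i = true) ∧
      ∀ β, C m ≤ β → β < α → ¬ ∃ j, e β j i = true}, ?_, rfl⟩
  apply measurable_fst
  apply measurableSet_of_depends_on (Finset.Ico (C m) (C (m + 1)))
  rintro f g hfg ⟨h1, h2, h3, h4⟩
  have hα : α ∈ Finset.Ico (C m) (C (m + 1)) := Finset.mem_Ico.mpr ⟨h1, h2⟩
  refine ⟨h1, h2, by rw [← hfg α hα]; exact h3, fun β hβ1 hβ2 hex => ?_⟩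
  refine h4 β hβ1 hβ2 ?_
  rwa [hfg β (Finset.mem_Ico.mpr ⟨hβ1, lt_trans hβ2 h2⟩)]

lemma measurableSet_of_comap_Ea {A : Set Ω}
    (hA : MeasurableSet[MeasurableSpace.comap S.EaMap inferInstance] A) :
    MeasurableSet A := by
  obtain ⟨s, hs, rfl⟩ := hA
  exact S.measurable_EaMap hs

lemma measurableSet_chiFail (i : Fin S.n) (α : ℕ) : MeasurableSet (S.chiFail i α) := by
  have : S.chiFail i α = (S.χ α i) ⁻¹' {false} := rfl
  rw [this]
  exact (S.hχ α i) MeasurableSet.of_discrete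

/-! #### Probability estimates -/

lemma measurableSet_comap_chiFail (i : Fin S.n) (α : ℕ) :
    MeasurableSet[MeasurableSpace.comap (fun ω p => S.χ p.1 p.2 ω :
      Ω → ℕ × Fin S.n → Bool) inferInstance] (S.chiFail i α) := by
  rw [MeasurableSpace.measurableSet_comap]
  refine ⟨{g : ℕ × Fin S.n → Bool | g (α, i) = false}, ?_, rfl⟩
  have he : {g : ℕ × Fin S.n → Bool | g (α, i) = false}
      = (fun g : ℕ × Fin S.n → Bool => g (α, i)) ⁻¹' {false} := rfl
  rw [he]
  exact (measurable_pi_apply (α, i)) MeasurableSet.of_discrete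

lemma meas_chiFail (i : Fin S.n) (α : ℕ) :
    S.μ (S.chiFail i α) = 1 - ENNReal.ofReal (S.P α) := by
  haveI := S.hμ
  have hs : MeasurableSet {ω | S.χ α i ω = true} := by
    have : {ω | S.χ α i ω = true} = (S.χ α i) ⁻¹' {true} := rfl
    rw [this]
    exact (S.hχ α i) MeasurableSet.of_discrete
  have hc : S.chiFail i α = {ω | S.χ α i ω = true}ᶜ := by
    ext ω
    simp [chiFail, Bool.not_eq_true]
  rw [hc, prob_compl_eq_one_sub hs, S.hχP]

lemma meas_biInter_chiFail (i : Fin S.n) (G : Finset ℕ) :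
    S.μ (⋂ β ∈ G, S.chiFail i β) = ∏ β ∈ G, (1 - ENNReal.ofReal (S.P β)) := by
  classical
  have hinj : Set.InjOn (fun β => ((β, i) : ℕ × Fin S.n)) G := by
    intro a _ b _ h
    exact congrArg Prod.fst h
  have h := S.hχindep.meas_biInter (S := G.image (fun β => (β, i)))
    (s := fun p => S.chiFail p.2 p.1) ?hs
  case hs =>
    intro p _
    rw [MeasurableSpace.measurableSet_comap]
    exact ⟨{false}, MeasurableSet.of_discrete, rfl⟩
  have h1 : (⋂ p ∈ G.image (fun β => ((β, i) : ℕ × Fin S.n)), S.chiFail p.2 p.1)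
      = ⋂ β ∈ G, S.chiFail i β := by
    ext ω
    simp only [Set.mem_iInter, Finset.mem_image]
    constructor
    · intro hh β hβ
      exact hh (β, i) ⟨β, hβ, rfl⟩
    · rintro hh p ⟨β, hβ, rfl⟩
      exact hh β hβ
  have h2 : (∏ p ∈ G.image (fun β => ((β, i) : ℕ × Fin S.n)), S.μ (S.chiFail p.2 p.1))
      = ∏ β ∈ G, S.μ (S.chiFail i β) := Finset.prod_image (fun a ha b hb => hinj ha hb)
  rw [h1, h2] at h
  rw [h]
  exact Finset.prod_congr rfl fun β _ => S.meas_chiFail i β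

lemma minArc_unique {i : Fin S.n} {C : ℕ → ℕ} {m : ℕ} {ω : Ω} {α α' : ℕ}
    (h1 : S.minArc i C m ω α) (h2 : S.minArc i C m ω α') : α = α' := by
  by_contra hne
  rcases lt_or_gt_of_ne hne with h | h
  · exact h2.2.2.2 α h1.1 h h1.2.2.1
  · exact h1.2.2.2 α' h2.1 h h2.2.2.1

/-- Core chain bound. -/
lemma chainBound (i : Fin S.n) (C : ℕ → ℕ) (hCmono : StrictMono C)
    (h0 : ∀ k, 0 ≤ S.P k)
    (T : Finset ℕ) (G : Finset ℕ)
    (hdis : ∀ m ∈ T, ∀ β ∈ G, β < C m ∨ C (m + 1) ≤ β)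
    (A : Set Ω) (hA : MeasurableSet[MeasurableSpace.comap S.EaMap inferInstance] A) :
    S.μ (A ∩ (⋂ β ∈ G, S.chiFail i β) ∩ ⋂ m ∈ T, S.FailEv i C m) ≤
      S.μ A * (∏ β ∈ G, (1 - ENNReal.ofReal (S.P β))) *
        ∏ m ∈ T, (1 - ENNReal.ofReal (Ptilde S.P C m)) := by
  classical
  induction T using Finset.induction_on generalizing A G with
  | empty =>
    rw [Finset.prod_empty, mul_one]
    have h0 : (⋂ m ∈ (∅ : Finset ℕ), S.FailEv i C m) = Set.univ := by simp
    rw [h0, Set.inter_univ]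
    have hmeasχ : MeasurableSet[MeasurableSpace.comap (fun ω p => S.χ p.1 p.2 ω :
        Ω → ℕ × Fin S.n → Bool) inferInstance] (⋂ β ∈ G, S.chiFail i β) :=
      Finset.measurableSet_biInter G fun β _ => S.measurableSet_comap_chiFail i β
    have hI := (IndepFun_iff _ _ _).mp S.hχext (⋂ β ∈ G, S.chiFail i β) A hmeasχ hA
    rw [Set.inter_comm, hI, S.meas_biInter_chiFail, mul_comm]
  | @insert k T' hk ih =>
    have hIk : ∀ α ∈ Finset.Ico (C k) (C (k + 1)), α ∉ G := by
      intro α hα hαG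
      have := hdis k (Finset.mem_insert_self _ _) α hαG
      have h2 := Finset.mem_Ico.mp hα
      omega
    have hsplit : A ∩ (⋂ β ∈ G, S.chiFail i β) ∩ ⋂ m ∈ insert k T', S.FailEv i C m ⊆
        ⋃ α ∈ Finset.Ico (C k) (C (k + 1)),
          ((A ∩ S.minArcEv i C k α) ∩ (⋂ β ∈ insert α G, S.chiFail i β) ∩
            ⋂ m ∈ T', S.FailEv i C m) := by
      rintro ω ⟨⟨hA', hG'⟩, hT'⟩
      simp only [Set.mem_iInter] at hT'
      obtain ⟨α, hma, hcf⟩ := hT' k (Finset.mem_insert_self _ _)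
      refine Set.mem_biUnion (Finset.mem_Ico.mpr ⟨hma.1, hma.2.1⟩) ?_
      refine ⟨⟨⟨hA', hma⟩, ?_⟩, ?_⟩
      · simp only [Set.mem_iInter] at hG' ⊢
        intro β hβ
        rcases Finset.mem_insert.mp hβ with h | h
        · rw [h]; exact hcf
        · exact hG' β h
      · simp only [Set.mem_iInter]
        intro m hm
        exact hT' m (Finset.mem_insert_of_mem hm)
    have hdis' : ∀ α ∈ Finset.Ico (C k) (C (k + 1)),
        ∀ m ∈ T', ∀ β ∈ insert α G, β < C m ∨ C (m + 1) ≤ β := by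
      intro α hα m hm β hβ
      have hαI := Finset.mem_Ico.mp hα
      rcases Finset.mem_insert.mp hβ with h | h
      · subst h
        have hmk : m ≠ k := fun h => hk (h ▸ hm)
        rcases lt_or_gt_of_ne hmk with hlt | hgt
        · right
          exact le_trans (hCmono.monotone hlt) hαI.1
        · left
          exact lt_of_lt_of_le hαI.2 (hCmono.monotone hgt)
      · exact hdis m (Finset.mem_insert_of_mem hm) β h
    calc S.μ (A ∩ (⋂ β ∈ G, S.chiFail i β) ∩ ⋂ m ∈ insert k T', S.FailEv i C m)
        ≤ S.μ (⋃ α ∈ Finset.Ico (C k) (C (k + 1)),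
          ((A ∩ S.minArcEv i C k α) ∩ (⋂ β ∈ insert α G, S.chiFail i β) ∩
            ⋂ m ∈ T', S.FailEv i C m)) := measure_mono hsplit
      _ ≤ ∑ α ∈ Finset.Ico (C k) (C (k + 1)),
          S.μ ((A ∩ S.minArcEv i C k α) ∩ (⋂ β ∈ insert α G, S.chiFail i β) ∩
            ⋂ m ∈ T', S.FailEv i C m) := measure_biUnion_finset_le _ _
      _ ≤ ∑ α ∈ Finset.Ico (C k) (C (k + 1)),
          S.μ (A ∩ S.minArcEv i C k α) *
            ((1 - ENNReal.ofReal (Ptilde S.P C k)) * ∏ β ∈ G, (1 - ENNReal.ofReal (S.P β))) *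
            ∏ m ∈ T', (1 - ENNReal.ofReal (Ptilde S.P C m)) := by
          apply Finset.sum_le_sum
          intro α hα
          have h1 := ih (hdis' α hα) (A ∩ S.minArcEv i C k α)
            (hA.inter (S.measurableSet_comap_minArcEv i C k α)) (G := insert α G)
          refine le_trans h1 ?_
          have h2 : (∏ β ∈ insert α G, (1 - ENNReal.ofReal (S.P β)))
              = (1 - ENNReal.ofReal (S.P α)) * ∏ β ∈ G, (1 - ENNReal.ofReal (S.P β)) :=
            Finset.prod_insert (hIk α hα)
          rw [h2]
          have hαI := Finset.mem_Ico.mp hα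
          have h3 : (1 - ENNReal.ofReal (S.P α)) ≤ (1 - ENNReal.ofReal (Ptilde S.P C k)) :=
            tsub_le_tsub_left (ENNReal.ofReal_le_ofReal (Ptilde_le h0 hαI.1 hαI.2)) 1
          exact mul_le_mul' (mul_le_mul' le_rfl (mul_le_mul' h3 le_rfl)) le_rfl
      _ = (∑ α ∈ Finset.Ico (C k) (C (k + 1)), S.μ (A ∩ S.minArcEv i C k α)) *
            ((1 - ENNReal.ofReal (Ptilde S.P C k)) * ∏ β ∈ G, (1 - ENNReal.ofReal (S.P β))) *
            ∏ m ∈ T', (1 - ENNReal.ofReal (Ptilde S.P C m)) := by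
          rw [Finset.sum_mul, Finset.sum_mul]
      _ ≤ S.μ A *
            ((1 - ENNReal.ofReal (Ptilde S.P C k)) * ∏ β ∈ G, (1 - ENNReal.ofReal (S.P β))) *
            ∏ m ∈ T', (1 - ENNReal.ofReal (Ptilde S.P C m)) := by
          apply mul_le_mul' (mul_le_mul' ?_ le_rfl) le_rfl
          have hdisj : (↑(Finset.Ico (C k) (C (k + 1))) : Set ℕ).Pairwise
              (Function.onFun Disjoint fun α => A ∩ S.minArcEv i C k α) := by
            intro α _ α' _ hne
            rw [Function.onFun, Set.disjoint_left]
            rintro ω ⟨_, hm1⟩ ⟨_, hm2⟩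
            exact hne (S.minArc_unique hm1 hm2)
          have hmeas : ∀ α ∈ Finset.Ico (C k) (C (k + 1)),
              MeasurableSet (A ∩ S.minArcEv i C k α) :=
            fun α _ => S.measurableSet_of_comap_Ea
              (hA.inter (S.measurableSet_comap_minArcEv i C k α))
          rw [← measure_biUnion_finset hdisj hmeas]
          apply measure_mono
          intro ω hω
          simp only [Set.mem_iUnion] at hω
          obtain ⟨_, _, h, _⟩ := hω
          exact h
      _ = S.μ A * (∏ β ∈ G, (1 - ENNReal.ofReal (S.P β))) *
            ∏ m ∈ insert k T', (1 - ENNReal.ofReal (Ptilde S.P C m)) := by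
          rw [Finset.prod_insert hk]
          ring

/-- Bound for a block of bad events. -/
lemma blockBound (i : Fin S.n) (C : ℕ → ℕ) (hCmono : StrictMono C)
    (h0 : ∀ k, 0 ≤ S.P k) (q : ℝ) (hq0 : 0 < q) (hq1 : q < 1)
    (hindep : iIndepSet (fun m : ℕ => S.QSCev C m) S.μ)
    (hconn : ∀ m : ℕ, ENNReal.ofReal q ≤ S.μ (S.QSCev C m))
    (M N : ℕ) :
    S.μ (⋂ m ∈ Finset.Ico M N, S.Dev i C m) ≤
      ∏ m ∈ Finset.Ico M N, (1 - ENNReal.ofReal (q * Ptilde S.P C m)) := by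
  classical
  haveI := S.hμ
  set F := Finset.Ico M N with hF
  have hcover : (⋂ m ∈ F, S.Dev i C m) ⊆ ⋃ T ∈ F.powerset,
      ((⋂ m ∈ F, (if m ∈ T then S.QSCev C m else (S.QSCev C m)ᶜ)) ∩
        ⋂ m ∈ T, S.FailEv i C m) := by
    intro ω hω
    simp only [Set.mem_iInter] at hω
    set T := F.filter (fun m => ω ∈ S.QSCev C m) with hTdef
    refine Set.mem_biUnion
      (Finset.mem_powerset.mpr (Finset.filter_subset (fun m => ω ∈ S.QSCev C m) F)) ?_
    constructor
    · simp only [Set.mem_iInter]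
      intro m hm
      by_cases hq : ω ∈ S.QSCev C m
      · have hmT : m ∈ T := Finset.mem_filter.mpr ⟨hm, hq⟩
        rw [if_pos hmT]; exact hq
      · have hmT : m ∉ T := fun hmem => hq (Finset.mem_filter.mp hmem).2
        rw [if_neg hmT]; exact hq
    · simp only [Set.mem_iInter]
      intro m hm
      have hq : ω ∈ S.QSCev C m := (Finset.mem_filter.mp hm).2
      rcases hω m (Finset.mem_filter.mp hm).1 with h | h
      · exact absurd hq h
      · exact h
  refine le_trans (measure_mono hcover) (le_trans (measure_biUnion_finset_le _ _) ?_)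
  have hQmeas : ∀ m, MeasurableSet (S.QSCev C m) :=
    fun m => S.measurableSet_of_comap_Ea (S.measurableSet_comap_QSCev C m)
  have hTbound : ∀ T ∈ F.powerset,
      S.μ ((⋂ m ∈ F, (if m ∈ T then S.QSCev C m else (S.QSCev C m)ᶜ)) ∩
        ⋂ m ∈ T, S.FailEv i C m) ≤
      (∏ m ∈ T, ((1 - ENNReal.ofReal (Ptilde S.P C m)) * S.μ (S.QSCev C m))) *
        ∏ m ∈ F \ T, S.μ ((S.QSCev C m)ᶜ) := by
    intro T hT
    have hsub := Finset.mem_powerset.mp hT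
    have hA : MeasurableSet[MeasurableSpace.comap S.EaMap inferInstance]
        (⋂ m ∈ F, (if m ∈ T then S.QSCev C m else (S.QSCev C m)ᶜ)) := by
      apply Finset.measurableSet_biInter
      intro m _
      by_cases h : m ∈ T
      · rw [if_pos h]; exact S.measurableSet_comap_QSCev C m
      · rw [if_neg h]; exact (S.measurableSet_comap_QSCev C m).compl
    have h1 := S.chainBound i C hCmono h0 T ∅ (by simp) _ hA
    simp only [Finset.prod_empty, mul_one, Finset.notMem_empty, Set.iInter_of_empty,
      Set.iInter_univ, Set.inter_univ] at h1
    refine le_trans h1 ?_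
    have hQT : S.μ (⋂ m ∈ F, (if m ∈ T then S.QSCev C m else (S.QSCev C m)ᶜ))
        = ∏ m ∈ F, S.μ (if m ∈ T then S.QSCev C m else (S.QSCev C m)ᶜ) := by
      have hii := (iIndepSet_iff_iIndep (fun m : ℕ => S.QSCev C m) S.μ).mp hindep
      apply hii.meas_biInter
      intro m _
      by_cases h : m ∈ T
      · rw [if_pos h]
        exact MeasurableSpace.measurableSet_generateFrom rfl
      · rw [if_neg h]
        exact (MeasurableSpace.measurableSet_generateFrom
          (show S.QSCev C m ∈ ({S.QSCev C m} : Set (Set Ω)) from rfl)).compl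
    have hsplitT : (∏ m ∈ F, S.μ (if m ∈ T then S.QSCev C m else (S.QSCev C m)ᶜ)) *
        ∏ m ∈ T, (1 - ENNReal.ofReal (Ptilde S.P C m))
        = (∏ m ∈ T, ((1 - ENNReal.ofReal (Ptilde S.P C m)) * S.μ (S.QSCev C m))) *
          ∏ m ∈ F \ T, S.μ ((S.QSCev C m)ᶜ) := by
      rw [← Finset.prod_filter_mul_prod_filter_not F (fun m => m ∈ T)]
      have hf1 : F.filter (fun m => m ∈ T) = T := by
        rw [Finset.filter_mem_eq_inter, Finset.inter_eq_right.mpr hsub]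
      have hf2 : F.filter (fun m => m ∉ T) = F \ T := (Finset.sdiff_eq_filter F T).symm
      rw [hf1, hf2]
      have hp1 : ∏ m ∈ T, S.μ (if m ∈ T then S.QSCev C m else (S.QSCev C m)ᶜ)
          = ∏ m ∈ T, S.μ (S.QSCev C m) :=
        Finset.prod_congr rfl fun m hm => by rw [if_pos hm]
      have hp2 : ∏ m ∈ F \ T, S.μ (if m ∈ T then S.QSCev C m else (S.QSCev C m)ᶜ)
          = ∏ m ∈ F \ T, S.μ ((S.QSCev C m)ᶜ) :=
        Finset.prod_congr rfl fun m hm => by rw [if_neg (Finset.mem_sdiff.mp hm).2]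
      rw [hp1, hp2, Finset.prod_mul_distrib]
      ring
    rw [hQT]
    exact le_of_eq hsplitT
  calc ∑ T ∈ F.powerset,
        S.μ ((⋂ m ∈ F, (if m ∈ T then S.QSCev C m else (S.QSCev C m)ᶜ)) ∩
          ⋂ m ∈ T, S.FailEv i C m)
      ≤ ∑ T ∈ F.powerset,
        (∏ m ∈ T, ((1 - ENNReal.ofReal (Ptilde S.P C m)) * S.μ (S.QSCev C m))) *
          ∏ m ∈ F \ T, S.μ ((S.QSCev C m)ᶜ) := Finset.sum_le_sum hTbound
    _ = ∏ m ∈ F, ((1 - ENNReal.ofReal (Ptilde S.P C m)) * S.μ (S.QSCev C m)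
          + S.μ ((S.QSCev C m)ᶜ)) := (Finset.prod_add _ _ _).symm
    _ ≤ ∏ m ∈ F, (1 - ENNReal.ofReal (q * Ptilde S.P C m)) := by
        apply Finset.prod_le_prod'
        intro m _
        set t := ENNReal.ofReal (Ptilde S.P C m) with ht
        set u := S.μ (S.QSCev C m) with hu
        have hufin : u ≠ ⊤ := measure_ne_top _ _
        have ht1 : t ≤ 1 :=
          ENNReal.ofReal_le_one.mpr (Ptilde_lt_one S.hP0 S.hP1 hCmono m).le
        have htu : t * u ≤ u := by
          nth_rewrite 2 [← one_mul u]
          exact mul_le_mul' ht1 le_rfl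
        have htufin : t * u ≠ ⊤ := (lt_of_le_of_lt htu (measure_lt_top _ _)).ne
        have hcompl : u + S.μ ((S.QSCev C m)ᶜ) = 1 := prob_add_prob_compl (hQmeas m)
        have hsm : (1 - t) * u = u - t * u := by
          rw [ENNReal.sub_mul (fun _ _ => hufin), one_mul]
        have key : (1 - t) * u + S.μ ((S.QSCev C m)ᶜ) + t * u = 1 := by
          rw [hsm]
          calc u - t * u + S.μ ((S.QSCev C m)ᶜ) + t * u
              = u - t * u + t * u + S.μ ((S.QSCev C m)ᶜ) := by ring
            _ = u + S.μ ((S.QSCev C m)ᶜ) := by rw [tsub_add_cancel_of_le htu]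
            _ = 1 := hcompl
        have heq : (1 - t) * u + S.μ ((S.QSCev C m)ᶜ) = 1 - t * u :=
          ENNReal.eq_sub_of_add_eq htufin key
        rw [heq, ENNReal.ofReal_mul hq0.le]
        apply tsub_le_tsub_left
        calc ENNReal.ofReal q * t ≤ u * t := mul_le_mul' (hconn m) le_rfl
          _ = t * u := mul_comm _ _

end RandConsensus


/-- Proposition 3 of the paper: if the joint graph on `[0,∞)` is almost surely acyclic
and the graph process is stochastically infinitely quasi-strongly connected, then
`∑ P̃_s = ∞` implies global a.s. consensus. -/
theorem consensus_acyclic {Ω : Type*} [MeasurableSpace Ω]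
    (S : RandConsensus Ω)
    (hacyc : S.μ {ω | IsAcyclicRel (S.jointRel ω Set.univ)} = 1)
    (C : ℕ → ℕ) (hC0 : C 0 = 0) (hCmono : StrictMono C)
    (q : ℝ) (hq0 : 0 < q) (hq1 : q < 1)
    (hindep : iIndepSet
      (fun m : ℕ => {ω | IsQSC (S.jointRel ω (Set.Ico (C m) (C (m + 1))))}) S.μ)
    (hconn : ∀ m : ℕ, ENNReal.ofReal q ≤
      S.μ {ω | IsQSC (S.jointRel ω (Set.Ico (C m) (C (m + 1))))})
    (hsum : ¬ Summable (fun s => Ptilde S.P C s)) :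
    S.consensus := by
  classical
  haveI := S.hμ
  intro x0
  have hPt0 : ∀ s, 0 ≤ Ptilde S.P C s := fun s => Ptilde_nonneg S.hP0 hCmono s
  have hPt1 : ∀ s, Ptilde S.P C s < 1 := fun s => Ptilde_lt_one S.hP0 S.hP1 hCmono s
  have hfac0 : ∀ m : ℕ, 0 ≤ 1 - q * Ptilde S.P C m := by
    intro m
    have h1 : q * Ptilde S.P C m ≤ q * 1 := mul_le_mul_of_nonneg_left (hPt1 m).le hq0.le
    nlinarith
  have hindep' : iIndepSet (fun m : ℕ => S.QSCev C m) S.μ := hindep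
  have hconn' : ∀ m : ℕ, ENNReal.ofReal q ≤ S.μ (S.QSCev C m) := hconn
  have hdiv0 : Tendsto (fun N => ∑ m ∈ Finset.range N, Ptilde S.P C m) atTop atTop :=
    (not_summable_iff_tendsto_nat_atTop_of_nonneg hPt0).mp hsum
  have hDevZero : ∀ (i : Fin S.n) (M : ℕ), S.μ (⋂ (m) (_ : M ≤ m), S.Dev i C m) = 0 := by
    intro i M
    have hdiv : Tendsto (fun N => ∑ m ∈ Finset.Ico M N, Ptilde S.P C m) atTop atTop := by
      have hev : (fun N => (∑ m ∈ Finset.range N, Ptilde S.P C m) +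
          -(∑ m ∈ Finset.range M, Ptilde S.P C m)) =ᶠ[atTop]
          (fun N => ∑ m ∈ Finset.Ico M N, Ptilde S.P C m) := by
        filter_upwards [eventually_ge_atTop M] with N hN
        rw [Finset.sum_Ico_eq_sub _ hN, sub_eq_add_neg]
      exact Tendsto.congr' hev (tendsto_atTop_add_const_right atTop _ hdiv0)
    have hexp : Tendsto (fun N => Real.exp (-(q * ∑ m ∈ Finset.Ico M N, Ptilde S.P C m)))
        atTop (nhds 0) := by
      apply Real.tendsto_exp_atBot.comp
      exact tendsto_neg_atTop_atBot.comp (hdiv.const_mul_atTop hq0)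
    have hreal : Tendsto (fun N => ∏ m ∈ Finset.Ico M N, (1 - q * Ptilde S.P C m))
        atTop (nhds 0) := by
      apply squeeze_zero (fun N => Finset.prod_nonneg fun m _ => hfac0 m) ?_ hexp
      intro N
      calc ∏ m ∈ Finset.Ico M N, (1 - q * Ptilde S.P C m)
          ≤ ∏ m ∈ Finset.Ico M N, Real.exp (-(q * Ptilde S.P C m)) := by
            apply Finset.prod_le_prod (fun m _ => hfac0 m)
            intro m _
            have := Real.add_one_le_exp (-(q * Ptilde S.P C m))
            linarith
        _ = Real.exp (∑ m ∈ Finset.Ico M N, -(q * Ptilde S.P C m)) := (Real.exp_sum _ _).symm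
        _ = Real.exp (-(q * ∑ m ∈ Finset.Ico M N, Ptilde S.P C m)) := by
            congr 1
            rw [Finset.mul_sum]
            simp only [Finset.sum_neg_distrib]
    have htendE : Tendsto (fun N => ∏ m ∈ Finset.Ico M N,
        ((1:ENNReal) - ENNReal.ofReal (q * Ptilde S.P C m))) atTop (nhds 0) := by
      have heqf : ∀ N, (∏ m ∈ Finset.Ico M N,
          ((1:ENNReal) - ENNReal.ofReal (q * Ptilde S.P C m)))
          = ENNReal.ofReal (∏ m ∈ Finset.Ico M N, (1 - q * Ptilde S.P C m)) := by
        intro N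
        rw [ENNReal.ofReal_prod_of_nonneg (fun m _ => hfac0 m)]
        apply Finset.prod_congr rfl
        intro m _
        rw [ENNReal.ofReal_sub _ (mul_nonneg hq0.le (hPt0 m)), ENNReal.ofReal_one]
      have h2 := ENNReal.tendsto_ofReal hreal
      rw [ENNReal.ofReal_zero] at h2
      exact Tendsto.congr (fun N => (heqf N).symm) h2
    have hb : ∀ N, S.μ (⋂ (m) (_ : M ≤ m), S.Dev i C m) ≤
        ∏ m ∈ Finset.Ico M N, ((1:ENNReal) - ENNReal.ofReal (q * Ptilde S.P C m)) := by
      intro N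
      refine le_trans (measure_mono ?_)
        (S.blockBound i C hCmono S.hP0 q hq0 hq1 hindep' hconn' M N)
      intro ω hω
      simp only [Set.mem_iInter] at hω ⊢
      intro m hm
      exact hω m (Finset.mem_Ico.mp hm).1
    have hle0 : S.μ (⋂ (m) (_ : M ≤ m), S.Dev i C m) ≤ 0 := ge_of_tendsto' htendE hb
    exact le_antisymm hle0 zero_le
  have hsubset : ({ω | IsAcyclicRel (S.jointRel ω Set.univ)} ∩
      ⋂ i : Fin S.n, (⋃ M : ℕ, ⋂ (m) (_ : M ≤ m), S.Dev i C m)ᶜ) ⊆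
      {ω | Tendsto (fun k => S.spread (S.state x0 k ω)) atTop (nhds 0)} := by
    rintro ω ⟨hac, hgood⟩
    apply S.det_tendsto x0 ω hac C hCmono
    intro i M
    have h1 := Set.mem_iInter.mp hgood i
    rw [Set.mem_compl_iff, Set.mem_iUnion] at h1
    push_neg at h1
    have h2 := h1 M
    rw [Set.mem_iInter] at h2
    push_neg at h2
    obtain ⟨m, hm2⟩ := h2
    rw [Set.mem_iInter] at hm2
    push_neg at hm2
    obtain ⟨hm, hdev⟩ := hm2
    simp only [RandConsensus.Dev, Set.mem_union, not_or, Set.mem_compl_iff,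
      not_not] at hdev
    exact ⟨m, hm, hdev.1, hdev.2⟩
  have hbad : S.μ (⋃ i : Fin S.n, ⋃ M : ℕ, ⋂ (m) (_ : M ≤ m), S.Dev i C m) = 0 :=
    measure_iUnion_null fun i => measure_iUnion_null fun M => hDevZero i M
  apply le_antisymm prob_le_one
  calc (1:ENNReal) = S.μ {ω | IsAcyclicRel (S.jointRel ω Set.univ)} := hacyc.symm
    _ ≤ S.μ ({ω | IsAcyclicRel (S.jointRel ω Set.univ)} ∩
          ⋂ i : Fin S.n, (⋃ M : ℕ, ⋂ (m) (_ : M ≤ m), S.Dev i C m)ᶜ)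
        + S.μ ({ω | IsAcyclicRel (S.jointRel ω Set.univ)} \
          ⋂ i : Fin S.n, (⋃ M : ℕ, ⋂ (m) (_ : M ≤ m), S.Dev i C m)ᶜ) :=
        measure_le_inter_add_diff _ _ _
    _ ≤ S.μ {ω | Tendsto (fun k => S.spread (S.state x0 k ω)) atTop (nhds 0)} + 0 := by
        apply add_le_add (measure_mono hsubset)
        calc S.μ ({ω | IsAcyclicRel (S.jointRel ω Set.univ)} \
              ⋂ i : Fin S.n, (⋃ M : ℕ, ⋂ (m) (_ : M ≤ m), S.Dev i C m)ᶜ)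
            ≤ S.μ ((⋂ i : Fin S.n, (⋃ M : ℕ, ⋂ (m) (_ : M ≤ m), S.Dev i C m)ᶜ)ᶜ) :=
              measure_mono fun ω hω => hω.2
          _ = 0 := by
              rw [Set.compl_iInter]
              simp only [compl_compl]
              exact hbad
    _ = S.μ {ω | Tendsto (fun k => S.spread (S.state x0 k ω)) atTop (nhds 0)} := add_zero _
end
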